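/- arXiv:1109.3741 — 3 statements merged into one kernel-verified Lean document; each statement's English description precedes it below -/
import Mathlib

section
/- Let D be a digraph, F an arborescence of D rooted at some vertex (a spanning tree with all edges directed away from the root), and suppose that for every edge xy of D not in F there exists a directed path in F from y to x. Then every directed cycle of D contains exactly one edge of E(D) ∖ E(F). -/
/-- A multidigraph on vertex type `V` with edge type `E`. -/
structure MDG (V : Type) (E : Type) where
  tail : E → V
  head : E → V

namespace MDG

variable {V E : Type}

/-- A directed walk from `u` to `w`, given as the list of its edges. -/
inductive IsWalk (D : MDG V E) : V → V → List E → Prop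
  | nil (v : V) : IsWalk D v v []
  | cons {u w : V} {e : E} {p : List E} :
      D.tail e = u → IsWalk D (D.head e) w p → IsWalk D u w (e :: p)

/-- Out-degree of a vertex. -/
def outDeg (D : MDG V E) [Fintype E] [DecidableEq V] (v : V) : ℕ :=
  (Finset.univ.filter fun e => D.tail e = v).card

/-- In-degree of a vertex. -/
def inDeg (D : MDG V E) [Fintype E] [DecidableEq V] (v : V) : ℕ :=
  (Finset.univ.filter fun e => D.head e = v).card

/-- Eulerian: in-degree equals out-degree at every vertex. -/
def Eulerian (D : MDG V E) [Fintype E] [DecidableEq V] : Prop :=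
  ∀ v, D.outDeg v = D.inDeg v

/-- Simple: no loops, and at most one edge per ordered pair of vertices. -/
def Simple (D : MDG V E) : Prop :=
  (∀ e, D.tail e ≠ D.head e) ∧
  ∀ e e', D.tail e = D.tail e' → D.head e = D.head e' → e = e'

/-- `d⁺(X)`: number of edges from `X` to its complement. -/
def cutOut (D : MDG V E) [Fintype E] [DecidableEq V] (X : Finset V) : ℕ :=
  (Finset.univ.filter fun e => D.tail e ∈ X ∧ D.head e ∉ X).card

/-- `d⁻(X)`: number of edges from the complement of `X` into `X`. -/
def cutIn (D : MDG V E) [Fintype E] [DecidableEq V] (X : Finset V) : ℕ :=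
  (Finset.univ.filter fun e => D.head e ∈ X ∧ D.tail e ∉ X).card

/-- `d(X) = d⁺(X) + d⁻(X)`. -/
def cut (D : MDG V E) [Fintype E] [DecidableEq V] (X : Finset V) : ℕ :=
  D.cutOut X + D.cutIn X

/-- Adjacency: there is an edge from `a` to `b`. -/
def Adj (D : MDG V E) (a b : V) : Prop :=
  ∃ e, D.tail e = a ∧ D.head e = b

/-- Immersion of the complete digraph `K⃗_t`: an injection `φ : Fin t → V` together with
pairwise edge-disjoint directed trails, one from `φ i` to `φ j` for each ordered pair
`i ≠ j`. -/
def ImmerseK (D : MDG V E) (t : ℕ) : Prop :=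
  ∃ φ : Fin t → V, Function.Injective φ ∧
    ∃ P : Fin t → Fin t → List E,
      (∀ i j : Fin t, i ≠ j → D.IsWalk (φ i) (φ j) (P i j) ∧ (P i j).Nodup) ∧
      ∀ i j i' j' : Fin t, (i, j) ≠ (i', j') → ∀ e, e ∈ P i j → e ∉ P i' j'

/-- Immersion of a multidigraph `F` in `D`: an injection of the vertices together with
pairwise edge-disjoint directed trails realizing the edges of `F`. -/
def Immerse (D : MDG V E) {n m : ℕ} (F : MDG (Fin n) (Fin m)) : Prop :=
  ∃ φ : Fin n → V, Function.Injective φ ∧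
    ∃ P : Fin m → List E,
      (∀ f, D.IsWalk (φ (F.tail f)) (φ (F.head f)) (P f) ∧ (P f).Nodup) ∧
      ∀ f f', f ≠ f' → ∀ e, e ∈ P f → e ∉ P f'

end MDG

/-!
Every vertex `v` has a unique tree path `path v` from the root `r`, and a tree walk from `u` to `w`
extends `path u` to `path w`. So a tree edge goes one level down, a non-tree edge goes up to an
ancestor of its tail, and a cycle of tree edges only is impossible. Rotate the cycle so that it ends
with the non-tree edge `e` whose head `w` is shallowest. If the rest of the cycle contained a
non-tree edge, the first one, `f`, would leave a tree path descending from `w` and jump back to an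
ancestor of its tail lying no higher than `w`, that is, to a vertex already on that path; then the
cycle would pass twice through `D.head f`.
-/

theorem List.exists_eq_append_cons_of_exists {α : Type*} {P : α → Prop} {l : List α}
    (h : ∃ a ∈ l, P a) : ∃ l₁ a l₂, l = l₁ ++ a :: l₂ ∧ P a ∧ ∀ b ∈ l₁, ¬ P b := by
  classical
  obtain ⟨a, ha⟩ := Option.isSome_iff_exists.mp
    (List.find?_isSome (p := fun a => decide (P a)) (xs := l) |>.mpr (by simpa using h))
  obtain ⟨hPa, l₁, l₂, rfl, hl₁⟩ := List.find?_eq_some_iff_append.mp ha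
  exact ⟨l₁, a, l₂, rfl, by simpa using hPa, by simpa using hl₁⟩

namespace MDG

variable {V E : Type} {D : MDG V E}

theorem isWalk_nil_iff {u w : V} : D.IsWalk u w [] ↔ u = w :=
  ⟨fun h => by cases h; rfl, fun h => h ▸ .nil u⟩

theorem isWalk_cons_iff {u w : V} {e : E} {p : List E} :
    D.IsWalk u w (e :: p) ↔ D.tail e = u ∧ D.IsWalk (D.head e) w p :=
  ⟨fun h => by cases h with | cons ht h => exact ⟨ht, h⟩, fun ⟨ht, h⟩ => .cons ht h⟩

theorem isWalk_append_iff {u w : V} {p q : List E} :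
    D.IsWalk u w (p ++ q) ↔ ∃ x, D.IsWalk u x p ∧ D.IsWalk x w q := by
  induction p generalizing u with
  | nil => exact ⟨fun h => ⟨u, .nil u, h⟩, fun ⟨x, hp, hq⟩ => isWalk_nil_iff.mp hp ▸ hq⟩
  | cons e p ih => simp only [List.cons_append, isWalk_cons_iff, ih]; aesop

theorem isWalk_concat_iff {u w : V} {p : List E} {e : E} :
    D.IsWalk u w (p ++ [e]) ↔ D.IsWalk u (D.tail e) p ∧ D.head e = w := by
  simp only [isWalk_append_iff, isWalk_cons_iff, isWalk_nil_iff]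
  exact ⟨fun ⟨x, hp, hx, hw⟩ => ⟨hx ▸ hp, hw⟩, fun ⟨hp, hw⟩ => ⟨_, hp, rfl, hw⟩⟩

theorem IsWalk.append {u x w : V} {p q : List E} (hp : D.IsWalk u x p) (hq : D.IsWalk x w q) :
    D.IsWalk u w (p ++ q) :=
  isWalk_append_iff.mpr ⟨x, hp, hq⟩

theorem IsWalk.target_unique {u w w' : V} {p : List E} (h : D.IsWalk u w p)
    (h' : D.IsWalk u w' p) : w = w' := by
  induction p generalizing u with
  | nil => exact (isWalk_nil_iff.mp h).symm.trans (isWalk_nil_iff.mp h')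
  | cons e p ih => exact ih (isWalk_cons_iff.mp h).2 (isWalk_cons_iff.mp h').2

theorem IsWalk.source_mem_map_tail {u w : V} {p : List E} (h : D.IsWalk u w p) (hp : p ≠ []) :
    u ∈ p.map D.tail := by
  cases h with
  | nil => exact absurd rfl hp
  | cons ht _ => exact List.mem_cons.mpr (.inl ht.symm)

theorem IsWalk.rotate {v : V} {p₁ p₂ : List E} {e : E} (h : D.IsWalk v v (p₁ ++ e :: p₂)) :
    D.IsWalk (D.head e) (D.head e) (p₂ ++ p₁ ++ [e]) := by
  obtain ⟨x, h₁, h₂⟩ := isWalk_append_iff.mp h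
  obtain ⟨hx, h₂⟩ := isWalk_cons_iff.mp h₂
  rw [List.append_assoc]
  exact h₂.append (isWalk_concat_iff.mpr ⟨hx ▸ h₁, rfl⟩)

def IsWalkIn (D : MDG V E) (F : Set E) (u w : V) (p : List E) : Prop :=
  D.IsWalk u w p ∧ ∀ e ∈ p, e ∈ F

theorem IsWalkIn.append {F : Set E} {u x w : V} {p q : List E} (hp : D.IsWalkIn F u x p)
    (hq : D.IsWalkIn F x w q) : D.IsWalkIn F u w (p ++ q) :=
  ⟨hp.1.append hq.1, fun e he => (List.mem_append.mp he).elim (hp.2 e) (hq.2 e)⟩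

structure IsArborescence (D : MDG V E) (r : V) (F : Set E) : Prop where
  head_ne_root : ∀ e ∈ F, D.head e ≠ r
  existsUnique_head : ∀ v, v ≠ r → ∃! e, e ∈ F ∧ D.head e = v
  reachable : ∀ v, ∃ p, D.IsWalkIn F r v p

section Root

variable {r : V} {F : Set E}

theorem eq_nil_of_isWalkIn_root (hroot : ∀ e ∈ F, D.head e ≠ r) {u : V} {p : List E}
    (h : D.IsWalkIn F u r p) : p = [] := by
  obtain rfl | ⟨p, e, rfl⟩ := p.eq_nil_or_concat
  · rfl
  · rw [List.concat_eq_append] at h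
    exact absurd (isWalk_concat_iff.mp h.1).2 (hroot e (h.2 e (by simp)))

theorem isWalkIn_root_unique (hroot : ∀ e ∈ F, D.head e ≠ r)
    (huniq : ∀ v, v ≠ r → ∃! e, e ∈ F ∧ D.head e = v) {v : V} {p q : List E}
    (hp : D.IsWalkIn F r v p) (hq : D.IsWalkIn F r v q) : p = q := by
  induction p using List.reverseRecOn generalizing v q with
  | nil =>
    obtain rfl := isWalk_nil_iff.mp hp.1
    exact (eq_nil_of_isWalkIn_root hroot hq).symm
  | append_singleton p e ih =>
    obtain ⟨hp', rfl⟩ := isWalk_concat_iff.mp hp.1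
    have hv : D.head e ≠ r := hroot e (hp.2 e (by simp))
    obtain rfl | ⟨q, f, rfl⟩ := q.eq_nil_or_concat
    · exact absurd (isWalk_nil_iff.mp hq.1).symm hv
    rw [List.concat_eq_append] at hq ⊢
    obtain ⟨hq', hf⟩ := isWalk_concat_iff.mp hq.1
    obtain rfl : f = e :=
      (huniq _ hv).unique ⟨hq.2 f (by simp), hf⟩ ⟨hp.2 e (by simp), rfl⟩
    rw [ih ⟨hp', fun g hg => hp.2 g (by simp [hg])⟩ ⟨hq', fun g hg => hq.2 g (by simp [hg])⟩]

end Root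

namespace IsArborescence

variable {r : V} {F : Set E} (hF : D.IsArborescence r F)
include hF

noncomputable def path (v : V) : List E :=
  (hF.reachable v).choose

theorem isWalkIn_path (v : V) : D.IsWalkIn F r v (hF.path v) :=
  (hF.reachable v).choose_spec

theorem path_append {u w : V} {q : List E} (hq : D.IsWalkIn F u w q) :
    hF.path w = hF.path u ++ q :=
  isWalkIn_root_unique hF.head_ne_root hF.existsUnique_head (hF.isWalkIn_path w)
    ((hF.isWalkIn_path u).append hq)

theorem path_prefix {u w : V} {q : List E} (hq : D.IsWalkIn F u w q) :
    hF.path u <+: hF.path w :=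
  ⟨q, (hF.path_append hq).symm⟩

theorem eq_nil_of_isWalkIn_cycle {v : V} {q : List E} (hq : D.IsWalkIn F v v q) : q = [] :=
  List.append_right_eq_self.mp (hF.path_append hq).symm

theorem exists_split_of_path_prefix {w x u : V} {q : List E} (hq : D.IsWalkIn F w u q)
    (hwx : hF.path w <+: hF.path x) (hxu : hF.path x <+: hF.path u) :
    ∃ t t', q = t ++ t' ∧ D.IsWalk w x t ∧ D.IsWalk x u t' := by
  obtain ⟨t, hx⟩ := hwx
  rw [hF.path_append hq, ← hx, List.prefix_append_right_inj] at hxu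
  obtain ⟨t', rfl⟩ := hxu
  obtain ⟨y, hy, hy'⟩ := isWalk_append_iff.mp hq.1
  obtain rfl : y = x :=
    ((hF.isWalkIn_path w).1.append hy).target_unique (hx ▸ (hF.isWalkIn_path x).1)
  exact ⟨t, t', rfl, hy, hy'⟩

theorem exists_not_mem_of_isWalk_cycle {v : V} {p : List E} (hw : D.IsWalk v v p)
    (hne : p ≠ []) : ∃ e ∈ p, e ∉ F := by
  by_contra! h
  exact hne (hF.eq_nil_of_isWalkIn_cycle ⟨hw, h⟩)

theorem forall_mem_of_isWalk_cycle
    (hback : ∀ e, e ∉ F → ∃ p, D.IsWalkIn F (D.head e) (D.tail e) p)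
    {w : V} {q : List E} {e : E} (hw : D.IsWalk w w (q ++ [e]))
    (hnodup : ((q ++ [e]).map D.tail).Nodup)
    (hmin : ∀ f ∈ q, f ∉ F → (hF.path w).length ≤ (hF.path (D.head f)).length) :
    ∀ f ∈ q, f ∈ F := by
  by_contra! h
  obtain ⟨q₁, f, q₂, rfl, hfF, hq₁F⟩ := List.exists_eq_append_cons_of_exists h
  simp only [not_not] at hq₁F
  simp only [List.append_assoc, List.cons_append] at hw
  obtain ⟨x, hq₁, hfq₂⟩ := isWalk_append_iff.mp hw
  obtain ⟨rfl, hq₂⟩ := isWalk_cons_iff.mp hfq₂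
  have hq₁' : D.IsWalkIn F w (D.tail f) q₁ := ⟨hq₁, hq₁F⟩
  obtain ⟨pb, hpb⟩ := hback f hfF
  have hwf : hF.path w <+: hF.path (D.head f) :=
    List.prefix_of_prefix_length_le (hF.path_prefix hq₁') (hF.path_prefix hpb)
      (hmin f (by simp) hfF)
  obtain ⟨t, t', rfl, -, ht'⟩ := hF.exists_split_of_path_prefix hq₁' hwf (hF.path_prefix hpb)
  -- the cycle visits `D.head f` twice: on the tree path `t'` before `f`, and right after `f`
  have h₁ : D.head f ∈ (t' ++ [f]).map D.tail :=
    (ht'.append (.cons rfl (.nil _))).source_mem_map_tail (by simp)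
  have h₂ : D.head f ∈ (q₂ ++ [e]).map D.tail := hq₂.source_mem_map_tail (by simp)
  rw [show t ++ t' ++ f :: q₂ ++ [e] = t ++ ((t' ++ [f]) ++ (q₂ ++ [e])) by simp,
    List.map_append, List.map_append] at hnodup
  exact (List.nodup_append.mp (List.nodup_append.mp hnodup).2.1).2.2 _ h₁ _ h₂ rfl

end IsArborescence

end MDG

/-- Let `F` be an arborescence of `D` rooted at `r` (no `F`-edge enters `r`, every other
vertex has exactly one entering `F`-edge, and every vertex is reachable from `r` by an
`F`-walk). If for every edge `e ∉ F` there is a directed `F`-path from the head of `e` to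
its tail, then every directed cycle of `D` contains exactly one edge not in `F`. -/
theorem cycle_one_nontree_edge {V E : Type} (D : MDG V E) (r : V) (F : Set E)
    (hroot : ∀ e ∈ F, D.head e ≠ r)
    (huniq : ∀ v : V, v ≠ r → ∃! e, e ∈ F ∧ D.head e = v)
    (hreach : ∀ v : V, ∃ p, D.IsWalk r v p ∧ ∀ e ∈ p, e ∈ F)
    (hback : ∀ e, e ∉ F → ∃ p, D.IsWalk (D.head e) (D.tail e) p ∧ ∀ f ∈ p, f ∈ F)
    (v : V) (p : List E) (hne : p ≠ []) (hw : D.IsWalk v v p)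
    (hnodup : (p.map D.tail).Nodup) :
    ∃! e, e ∈ p ∧ e ∉ F := by
  have hF : D.IsArborescence r F := ⟨hroot, huniq, hreach⟩
  obtain ⟨e, ⟨hep, heF⟩, hmin⟩ :=
    Set.exists_min_image {e | e ∈ p ∧ e ∉ F} (fun e => (hF.path (D.head e)).length)
      (p.finite_toSet.subset fun e he => he.1) (hF.exists_not_mem_of_isWalk_cycle hw hne)
  obtain ⟨p₁, p₂, rfl⟩ := List.append_of_mem hep
  have hperm : (p₂ ++ p₁ ++ [e]).Perm (p₁ ++ e :: p₂) := by
    simpa using (List.perm_append_comm (l₁ := p₁ ++ [e]) (l₂ := p₂)).symm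
  have htree := hF.forall_mem_of_isWalk_cycle hback hw.rotate
    ((hperm.map D.tail).nodup_iff.mpr hnodup)
    fun f hf hfF => hmin f ⟨hperm.subset (List.mem_append_left _ hf), hfF⟩
  refine ⟨e, ⟨hep, heF⟩, fun e' ⟨he'p, he'F⟩ => ?_⟩
  by_contra he'e
  refine he'F (htree e' ?_)
  simp only [List.mem_append, List.mem_cons] at he'p ⊢
  tauto
end

section
/- Let D be a digraph containing an arborescence F rooted at r such that every edge of D not in F goes from a vertex x to an ancestor of x in F (i.e., to a vertex on the F-path from r to x). Then for any two distinct vertices u, v of D, min(λ(u,v), λ(v,u)) ≤ 1, where λ(a,b) is the maximum number of pairwise edge-disjoint directed paths from a to b. -/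
lemma MDG.IsWalk.append_s12 {V E : Type} {D : MDG V E} {a b : V} {p : List E}
    (h : D.IsWalk a b p) : ∀ {c : V} {q : List E}, D.IsWalk b c q → D.IsWalk a c (p ++ q) := by
  induction h with
  | nil => intro c q h'; simpa
  | cons ht _ ih => intro c q h'; exact .cons ht (ih h')

lemma MDG.IsWalk.eq_of_nil {V E : Type} {D : MDG V E} {a b : V}
    (h : D.IsWalk a b []) : a = b := by
  cases h; rfl

lemma MDG.IsWalk.last {V E : Type} {D : MDG V E} {a b : V} {p : List E}
    (h : D.IsWalk a b p) : p ≠ [] →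
    ∃ p' f, p = p' ++ [f] ∧ D.IsWalk a (D.tail f) p' ∧ D.head f = b := by
  induction h with
  | nil => exact fun hne => absurd rfl hne
  | @cons u w e q ht hw ih =>
    intro _
    rcases eq_or_ne q [] with hq | hq
    · subst hq
      refine ⟨[], e, by simp, ?_, hw.eq_of_nil⟩
      rw [← ht]; exact .nil _
    · obtain ⟨q', f, hqq, hw', hfh⟩ := ih hq
      exact ⟨e :: q', f, by simp [hqq], .cons ht hw', hfh⟩

lemma MDG.IsWalk.cross {V E : Type} {D : MDG V E} {X : V → Prop} {a b : V} {p : List E}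
    (h : D.IsWalk a b p) : ¬ X a → X b → ∃ e ∈ p, ¬ X (D.tail e) ∧ X (D.head e) := by
  induction h with
  | nil => exact fun ha hb => absurd hb ha
  | @cons u w e q ht hw ih =>
    intro ha hb
    by_cases hx : X (D.head e)
    · exact ⟨e, by simp, ht ▸ ha, hx⟩
    · obtain ⟨f, hfm, hft, hfh⟩ := ih hx hb
      exact ⟨f, by simp [hfm], hft, hfh⟩

lemma MDG.acyclic {V E : Type} (D : MDG V E) (r : V) (F : Set E)
    (hroot : ∀ e ∈ F, D.head e ≠ r)
    (huniq : ∀ v : V, v ≠ r → ∃! e, e ∈ F ∧ D.head e = v) :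
    ∀ (n : ℕ) (u : V) (p : List E), D.IsWalk r u p → (∀ e ∈ p, e ∈ F) →
      p.length = n → ∀ c, c ≠ [] → D.IsWalk u u c → (∀ e ∈ c, e ∈ F) → False := by
  intro n
  induction n with
  | zero =>
    intro u p hp hpF hlen c hc hcw hcF
    have hpe : p = [] := List.length_eq_zero_iff.mp hlen
    subst hpe
    have hur : r = u := hp.eq_of_nil
    obtain ⟨c', f, hcc, _, hfh⟩ := hcw.last hc
    exact hroot f (hcF f (by simp [hcc])) (hfh.trans hur.symm)
  | succ n ih =>
    intro u p hp hpF hlen c hc hcw hcF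
    obtain ⟨c', f, hcc, hcw', hfh⟩ := hcw.last hc
    have hfF : f ∈ F := hcF f (by simp [hcc])
    have hur : u ≠ r := fun h => hroot f hfF (hfh.trans h)
    have hpne : p ≠ [] := fun h => hur (h ▸ hp).eq_of_nil.symm
    obtain ⟨p', g, hpp, hpw', hgh⟩ := hp.last hpne
    have hgF : g ∈ F := hpF g (by simp [hpp])
    have hfg : f = g := (huniq u hur).unique ⟨hfF, hfh⟩ ⟨hgF, hgh⟩
    have hclosed : D.IsWalk (D.tail f) (D.tail f) (f :: c') := by
      refine .cons rfl ?_
      rw [hfh]; exact hcw'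
    refine ih (D.tail f) p' ?_ (fun e he => hpF e (by simp [hpp, he])) ?_
      (f :: c') (by simp) hclosed ?_
    · rw [hfg]; exact hpw'
    · have := hlen; rw [hpp] at this; simpa using this
    · intro e he
      rcases List.mem_cons.mp he with h | h
      · exact h ▸ hfF
      · exact hcF e (by simp [hcc, h])

/-- If `D` contains an arborescence `F` rooted at `r` such that every edge not in `F` goes
from a vertex to one of its `F`-ancestors, then for any two distinct vertices `u, v`, it is
not the case that there are both two edge-disjoint `u→v` trails and two edge-disjoint
`v→u` trails; that is, `min(λ(u,v), λ(v,u)) ≤ 1`. -/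
theorem min_lambda_le_one {V E : Type} (D : MDG V E) (r : V) (F : Set E)
    (hroot : ∀ e ∈ F, D.head e ≠ r)
    (huniq : ∀ v : V, v ≠ r → ∃! e, e ∈ F ∧ D.head e = v)
    (hreach : ∀ v : V, ∃ p, D.IsWalk r v p ∧ ∀ e ∈ p, e ∈ F)
    (hback : ∀ e, e ∉ F → ∃ p, D.IsWalk (D.head e) (D.tail e) p ∧ ∀ f ∈ p, f ∈ F)
    (u v : V) (huv : u ≠ v) :
    ¬((∃ p₁ p₂ : List E, D.IsWalk u v p₁ ∧ D.IsWalk u v p₂ ∧ (p₁ ++ p₂).Nodup) ∧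
      (∃ q₁ q₂ : List E, D.IsWalk v u q₁ ∧ D.IsWalk v u q₂ ∧ (q₁ ++ q₂).Nodup)) := by
  rintro ⟨⟨p₁, p₂, hp₁, hp₂, hpnd⟩, ⟨q₁, q₂, hq₁, hq₂, hqnd⟩⟩
  classical
  set Anc : V → V → Prop := fun a b => ∃ p, D.IsWalk a b p ∧ ∀ e ∈ p, e ∈ F with hAnc
  have htrans : ∀ a b c, Anc a b → Anc b c → Anc a c := by
    rintro a b c ⟨p, hp, hpF⟩ ⟨q, hq, hqF⟩
    exact ⟨p ++ q, hp.append_s12 hq,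
      fun e he => (List.mem_append.mp he).elim (hpF e) (hqF e)⟩
  have hanti : ∀ a b, a ≠ b → Anc a b → Anc b a → False := by
    rintro a b hab ⟨p, hp, hpF⟩ ⟨q, hq, hqF⟩
    obtain ⟨s, hs, hsF⟩ := hreach a
    refine MDG.acyclic D r F hroot huniq s.length a s hs hsF rfl (p ++ q) ?_
      (hp.append_s12 hq) ?_
    · intro h
      rcases List.append_eq_nil_iff.mp h with ⟨h1, _⟩
      subst h1
      exact hab hp.eq_of_nil
    · intro e he
      rcases List.mem_append.mp he with h | h
      exacts [hpF e h, hqF e h]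
  have crossF : ∀ x e, ¬ Anc x (D.tail e) → Anc x (D.head e) →
      e ∈ F ∧ D.head e = x := by
    intro x e hnt hh
    have hxr : x ≠ r := by rintro rfl; exact hnt (hreach _)
    by_cases heF : e ∈ F
    · refine ⟨heF, ?_⟩
      by_contra hne
      obtain ⟨w, hw, hwF⟩ := hh
      have hwne : w ≠ [] := fun h => hne ((h ▸ hw).eq_of_nil).symm
      obtain ⟨w', f, hww, hw', hfh⟩ := hw.last hwne
      have hfF : f ∈ F := hwF f (by simp [hww])
      have hher : D.head e ≠ r := hroot e heF
      have hfe : f = e := (huniq (D.head e) hher).unique ⟨hfF, hfh⟩ ⟨heF, rfl⟩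
      exact hnt ⟨w', hfe ▸ hw', fun g hg => hwF g (by simp [hww, hg])⟩
    · obtain ⟨q, hq, hqF⟩ := hback e heF
      exact absurd (htrans x _ _ hh ⟨q, hq, hqF⟩) hnt
  have core : ∀ (x y : V), ¬ Anc x y → ∀ w₁ w₂, D.IsWalk y x w₁ →
      D.IsWalk y x w₂ → (w₁ ++ w₂).Nodup → False := by
    intro x y hxy w₁ w₂ h1 h2 hnd
    have hXx : Anc x x := ⟨[], .nil x, by simp⟩
    obtain ⟨e₁, he₁m, he₁t, he₁h⟩ := h1.cross (X := fun w => Anc x w) hxy hXx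
    obtain ⟨e₂, he₂m, he₂t, he₂h⟩ := h2.cross (X := fun w => Anc x w) hxy hXx
    have hxr : x ≠ r := by rintro rfl; exact hxy (hreach _)
    have c1 := crossF x e₁ he₁t he₁h
    have c2 := crossF x e₂ he₂t he₂h
    have he12 : e₁ = e₂ := (huniq x hxr).unique c1 c2
    exact (List.disjoint_of_nodup_append hnd) he₁m (he12 ▸ he₂m)
  by_cases hA : Anc u v
  · have hB : ¬ Anc v u := fun h => hanti u v huv hA h
    exact core v u hB p₁ p₂ hp₁ hp₂ hpnd
  · exact core u v hA q₁ q₂ hq₁ hq₂ hqnd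
end

section
/- Let D be an Eulerian digraph and let P₁,…,P_j be pairwise edge-disjoint directed paths from a vertex x to a vertex y. Then the digraph obtained from D by deleting the edges of P₁,…,P_j contains j pairwise edge-disjoint directed paths from y to x. -/
namespace MDG

variable {V E : Type}

variable [DecidableEq V] (D : MDG V E)

def incidence (v : V) (e : E) : ℤ :=
  (if D.tail e = v then 1 else 0) - (if D.head e = v then 1 else 0)

def netOut (S : Finset E) (v : V) : ℤ :=
  ∑ e ∈ S, D.incidence v e

variable {D}

theorem IsWalk.sum_incidence {u w : V} {p : List E} (h : D.IsWalk u w p) (v : V) :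
    (p.map (D.incidence v)).sum = (if u = v then 1 else 0) - (if w = v then 1 else 0) := by
  induction h with
  | nil => simp
  | cons ht _ ih =>
    subst ht
    rw [List.map_cons, List.sum_cons, ih, incidence]
    ring

theorem IsWalk.netOut_toFinset [DecidableEq E] {u w : V} {p : List E} (h : D.IsWalk u w p)
    (hp : p.Nodup) (v : V) :
    D.netOut p.toFinset v = (if u = v then 1 else 0) - (if w = v then 1 else 0) := by
  rw [netOut, List.sum_toFinset _ hp, h.sum_incidence]

theorem netOut_sdiff [DecidableEq E] {S T : Finset E} (hT : T ⊆ S) (v : V) :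
    D.netOut (S \ T) v = D.netOut S v - D.netOut T v :=
  Finset.sum_sdiff_eq_sub hT

theorem netOut_biUnion [DecidableEq E] {ι : Type*} {s : Finset ι} {t : ι → Finset E}
    (h : (s : Set ι).PairwiseDisjoint t) (v : V) :
    D.netOut (s.biUnion t) v = ∑ i ∈ s, D.netOut (t i) v :=
  Finset.sum_biUnion h

theorem Eulerian.netOut_univ [Fintype E] (he : D.Eulerian) (v : V) :
    D.netOut Finset.univ v = 0 := by
  simp only [netOut, incidence, Finset.sum_sub_distrib, Finset.sum_boole]
  exact sub_eq_zero.mpr (congrArg _ (he v))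

theorem exists_out_edge_of_netOut_pos {S : Finset E} {u : V} (hu : 0 < D.netOut S u) :
    ∃ e ∈ S, D.tail e = u := by
  by_contra! hS
  refine hu.not_ge (Finset.sum_nonpos fun e he => ?_)
  simp only [incidence, hS e he, ↓reduceIte, zero_sub, Left.neg_nonpos_iff]
  split_ifs <;> norm_num

variable [DecidableEq E]

theorem exists_trail_of_netOut_nonneg (x : V) (S : Finset E)
    (hS : ∀ v ≠ x, 0 ≤ D.netOut S v) {u : V} (hu : 0 < D.netOut S u) :
    ∃ p, D.IsWalk u x p ∧ p.Nodup ∧ p.toFinset ⊆ S := by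
  induction S using Finset.strongInduction generalizing u with
  | H S ih =>
  obtain ⟨e, heS, rfl⟩ := exists_out_edge_of_netOut_pos hu
  by_cases hx : D.head e = x
  · exact ⟨[e], .cons rfl (hx ▸ .nil _), List.nodup_singleton e, by simpa using heS⟩
  have herase (v : V) : D.netOut (S.erase e) v = D.netOut S v - D.incidence v e :=
    Finset.sum_erase_eq_sub heS
  have hS' : ∀ v ≠ x, 0 ≤ D.netOut (S.erase e) v := by
    intro v hv
    have := hS v hv
    rw [herase, incidence]
    split_ifs <;> subst_vars <;> omega
  have hhead : 0 < D.netOut (S.erase e) (D.head e) := by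
    have := hS _ hx
    rw [herase, incidence]
    split_ifs <;> simp_all
  obtain ⟨p, hp, hnd, hsub⟩ := ih _ (Finset.erase_ssubset heS) hS' hhead
  refine ⟨e :: p, .cons rfl hp, List.nodup_cons.mpr ⟨fun h => ?_, hnd⟩, ?_⟩
  · simpa using hsub (List.mem_toFinset.mpr h)
  · rw [List.toFinset_cons]
    exact Finset.insert_subset heS (hsub.trans (Finset.erase_subset e S))

theorem exists_disjoint_trails_of_netOut (x y : V) (k : ℕ) (S : Finset E)
    (hS : ∀ v ≠ x, 0 ≤ D.netOut S v) (hy : (k : ℤ) ≤ D.netOut S y) :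
    ∃ Q : Fin k → List E,
      (∀ i, D.IsWalk y x (Q i) ∧ (Q i).Nodup) ∧
      (∀ i i', i ≠ i' → ∀ e, e ∈ Q i → e ∉ Q i') ∧
      ∀ i, (Q i).toFinset ⊆ S := by
  induction k generalizing S with
  | zero => exact ⟨Fin.elim0, fun i => i.elim0, fun i => i.elim0, fun i => i.elim0⟩
  | succ k ih =>
  push_cast at hy
  obtain ⟨p, hp, hnd, hsub⟩ := exists_trail_of_netOut_nonneg x S hS (by omega : 0 < D.netOut S y)
  have hrest (v : V) : D.netOut (S \ p.toFinset) v
      = D.netOut S v - ((if y = v then 1 else 0) - (if x = v then 1 else 0)) := by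
    rw [netOut_sdiff hsub, hp.netOut_toFinset hnd]
  obtain ⟨Q, hQ, hQdisj, hQsub⟩ := ih (S \ p.toFinset)
    (fun v hv => by have := hS v hv; rw [hrest]; split_ifs <;> subst_vars <;> omega)
    (by rw [hrest]; split_ifs <;> omega)
  have hpQ (i : Fin k) (e : E) (hQ : e ∈ Q i) : e ∉ p := fun hp =>
    (Finset.mem_sdiff.mp (hQsub i (List.mem_toFinset.mpr hQ))).2 (List.mem_toFinset.mpr hp)
  refine ⟨Fin.cons p Q, ?_, ?_, ?_⟩
  · simpa [Fin.forall_fin_succ] using ⟨⟨hp, hnd⟩, hQ⟩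
  · simp only [Fin.forall_fin_succ, Fin.cons_zero, Fin.cons_succ, ne_eq, not_true_eq_false,
      Fin.succ_ne_zero, (Fin.succ_ne_zero _).symm, Fin.succ_inj, not_false_eq_true,
      IsEmpty.forall_iff, forall_const, true_and]
    exact ⟨fun i e he hQ => hpQ i e hQ he, fun i => ⟨hpQ i, hQdisj i⟩⟩
  · exact Fin.cases hsub (fun i => (hQsub i).trans Finset.sdiff_subset)

end MDG

theorem eulerian_reverse_paths_general {V E : Type} [Fintype E] [DecidableEq V]
    (D : MDG V E) (he : D.Eulerian) (x y : V) (j : ℕ) (P : Fin j → List E)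
    (hP : ∀ i, D.IsWalk x y (P i) ∧ (P i).Nodup)
    (hdisj : ∀ i i', i ≠ i' → ∀ e, e ∈ P i → e ∉ P i') :
    ∃ Q : Fin j → List E,
      (∀ i, D.IsWalk y x (Q i) ∧ (Q i).Nodup) ∧
      (∀ i i', i ≠ i' → ∀ e, e ∈ Q i → e ∉ Q i') ∧
      ∀ i, ∀ e ∈ Q i, ∀ i', e ∉ P i' := by
  classical
  rcases eq_or_ne y x with rfl | hxy
  · exact ⟨fun _ => [], fun _ => ⟨.nil y, List.nodup_nil⟩, by simp, by simp⟩
  set T := Finset.univ.biUnion fun i => (P i).toFinset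
  have hTdisj : ((Finset.univ : Finset (Fin j)) : Set (Fin j)).PairwiseDisjoint
      fun i => (P i).toFinset := fun i _ i' _ hne => Finset.disjoint_left.mpr fun e h h' =>
      hdisj i i' hne e (List.mem_toFinset.mp h) (List.mem_toFinset.mp h')
  have hrest (v : V) : D.netOut (Finset.univ \ T) v
      = j * ((if y = v then 1 else 0) - (if x = v then 1 else 0)) := by
    rw [MDG.netOut_sdiff (Finset.subset_univ T), he.netOut_univ, MDG.netOut_biUnion hTdisj]
    simp only [fun i => (hP i).1.netOut_toFinset (hP i).2 v, Finset.sum_const,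
      Finset.card_univ, Fintype.card_fin, nsmul_eq_mul]
    ring
  obtain ⟨Q, hQ, hQdisj, hQsub⟩ := MDG.exists_disjoint_trails_of_netOut x y j (Finset.univ \ T)
    (fun v hv => by rw [hrest, if_neg hv.symm]; split_ifs <;> simp)
    (by rw [hrest]; simp [hxy.symm])
  refine ⟨Q, hQ, hQdisj, fun i e heQ i' heP => ?_⟩
  have := hQsub i (List.mem_toFinset.mpr heQ)
  simp only [T, Finset.mem_sdiff, Finset.mem_biUnion, List.mem_toFinset] at this
  exact this.2 ⟨i', Finset.mem_univ _, heP⟩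

/-- Let `D` be Eulerian and let `P₁, …, P_j` be pairwise edge-disjoint directed trails from
`x` to `y`.  Then after deleting their edges, `D` still contains `j` pairwise edge-disjoint
directed trails from `y` to `x`. -/
theorem eulerian_reverse_paths {V E : Type} [Fintype V] [Fintype E] [DecidableEq V]
    (D : MDG V E) (he : D.Eulerian) (x y : V) (j : ℕ) (P : Fin j → List E)
    (hP : ∀ i, D.IsWalk x y (P i) ∧ (P i).Nodup)
    (hdisj : ∀ i i', i ≠ i' → ∀ e, e ∈ P i → e ∉ P i') :
    ∃ Q : Fin j → List E,
      (∀ i, D.IsWalk y x (Q i) ∧ (Q i).Nodup) ∧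
      (∀ i i', i ≠ i' → ∀ e, e ∈ Q i → e ∉ Q i') ∧
      ∀ i, ∀ e ∈ Q i, ∀ i', e ∉ P i' :=
  eulerian_reverse_paths_general D he x y j P hP hdisj
end
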